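/- arXiv:2403.06298 — 2 statements merged into one kernel-verified Lean document; each statement's English description precedes it below -/
import Mathlib

section
/- (Main theorem) Let G = (V, E) be a finite weighted similarity graph with weights A_{i,i'} > 0, let L_i : R^d → R_{≥0} be nonnegative local loss functions, and let {ŵ^(i)}_{i∈V} be a minimizer of the GTVMin objective f(w) = ∑_{i∈V} L_i(w^(i)) + α ∑_{{i,i'}∈E} A_{i,i'} ‖w^(i) − w^(i')‖² with α > 0. Suppose C ⊆ V is a cluster for which there exists w̄ ∈ R^d with ∑_{i∈C} L_i(w̄) ≤ ε, and suppose ‖ŵ^(i)‖ ≤ R for all i ∉ C. Let λ₂ > 0 be the second smallest eigenvalue of the Laplacian of the subgraph induced on C, and bd(C) the total weight of edges crossing the boundary of C. Then ∑_{i∈C} ‖ŵ^(i) − avg_C‖² ≤ (1/(α λ₂)) [ ε + 2 α bd(C) ( ‖w̄‖² + R² ) ], where avg_C = (1/|C|) ∑_{i∈C} ŵ^(i). -/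
/-!
Comparing the minimizer `ŵ` with the competitor that equals `w̄` on `C` and `ŵ` off `C` removes
the energy inside `C` and bounds the boundary energy by `2 bd(C) (‖w̄‖² + R²)`, so that
`α/2 ∑_{i,i' ∈ C} A_{i,i'} ‖ŵ_i - ŵ_i'‖² ≤ ε + 2 α bd(C) (‖w̄‖² + R²)`.
Coordinatewise, the left-hand double sum is twice the Laplacian quadratic form of the centred
vector, which is orthogonal to the constants (the kernel of the Laplacian) and is therefore
bounded below by `λ₂` times its squared norm.
-/

open Finset Matrix

def weightedLaplacian {ι : Type*} [Fintype ι] [DecidableEq ι] (B : ι → ι → ℝ) :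
    Matrix ι ι ℝ :=
  of fun a b => if a = b then ∑ c ∈ univ.erase a, B a c else -B a b

section Laplacian

variable {ι : Type*} [Fintype ι] [DecidableEq ι] {B : ι → ι → ℝ}

theorem weightedLaplacian_mulVec_apply (y : ι → ℝ) (a : ι) :
    (weightedLaplacian B *ᵥ y) a = ∑ b, B a b * (y a - y b) := by
  rw [mulVec, dotProduct, ← add_sum_erase _ _ (mem_univ a),
    ← add_sum_erase _ (fun b => B a b * (y a - y b)) (mem_univ a), sub_self, mul_zero, zero_add]
  simp only [weightedLaplacian, of_apply, if_true]
  rw [sum_mul, ← sum_add_distrib]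
  refine sum_congr rfl fun b hb => ?_
  rw [if_neg (ne_of_mem_erase hb).symm]
  ring

theorem weightedLaplacian_mulVec_one : weightedLaplacian B *ᵥ 1 = 0 := by
  ext a
  simp [weightedLaplacian_mulVec_apply]

theorem transpose_weightedLaplacian (hB : ∀ a b, B a b = B b a) :
    (weightedLaplacian B)ᵀ = weightedLaplacian B := by
  ext a b
  by_cases h : a = b
  · subst h; rfl
  · simp [weightedLaplacian, h, Ne.symm h, hB a b]

theorem two_mul_dotProduct_weightedLaplacian_mulVec (hB : ∀ a b, B a b = B b a) (y : ι → ℝ) :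
    2 * (y ⬝ᵥ weightedLaplacian B *ᵥ y) = ∑ a, ∑ b, B a b * (y a - y b) ^ 2 := by
  have hswap : ∑ a, ∑ b, B a b * (y a - y b) * y b = -∑ a, ∑ b, B a b * (y a - y b) * y a := by
    rw [sum_comm, ← sum_neg_distrib]
    refine sum_congr rfl fun a _ => ?_
    rw [← sum_neg_distrib]
    exact sum_congr rfl fun b _ => by rw [hB b a]; ring
  have hexpand : ∑ a, ∑ b, B a b * (y a - y b) ^ 2 =
      ∑ a, ∑ b, B a b * (y a - y b) * y a - ∑ a, ∑ b, B a b * (y a - y b) * y b := by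
    simp only [← sum_sub_distrib]
    exact sum_congr rfl fun a _ => sum_congr rfl fun b _ => by ring
  rw [hexpand, hswap, sub_neg_eq_add, ← two_mul, dotProduct]
  congr 1
  simp only [weightedLaplacian_mulVec_apply, mul_sum]
  exact sum_congr rfl fun a _ => sum_congr rfl fun b _ => by ring

end Laplacian

theorem dotProduct_mulVec_of_eigenvector {ι : Type*} [Fintype ι] {M : Matrix ι ι ℝ}
    (hM : Mᵀ = M) {v : ι → ℝ} {c : ℝ} (hv : M *ᵥ v = c • v) (y : ι → ℝ) :
    v ⬝ᵥ M *ᵥ y = c * (v ⬝ᵥ y) := by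
  rw [dotProduct_mulVec, ← hM, vecMul_transpose, hv, smul_dotProduct, smul_eq_mul]

section OrthonormalEigenbasis

variable {κ ι : Type*} [Fintype κ] [DecidableEq κ] [Fintype ι] [DecidableEq ι] {u : κ → ι → ℝ}

theorem dotProduct_eq_sum_of_orthonormal (hcard : Fintype.card κ = Fintype.card ι)
    (horth : ∀ j k, u j ⬝ᵥ u k = if j = k then 1 else 0) (p q : ι → ℝ) :
    p ⬝ᵥ q = ∑ j, (u j ⬝ᵥ p) * (u j ⬝ᵥ q) := by
  have hUUt : of u * (of u)ᵀ = 1 := by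
    ext j k
    rw [mul_apply, one_apply, ← horth j k]
    rfl
  have hUtU : (of u)ᵀ * of u = 1 := (mul_eq_one_comm_of_equiv (Fintype.equivOfCardEq hcard)).mp hUUt
  calc p ⬝ᵥ q = p ⬝ᵥ ((of u)ᵀ * of u) *ᵥ q := by rw [hUtU, one_mulVec]
    _ = (of u *ᵥ p) ⬝ᵥ (of u *ᵥ q) := by
      rw [← mulVec_mulVec, dotProduct_mulVec, vecMul_transpose]
    _ = ∑ j, (u j ⬝ᵥ p) * (u j ⬝ᵥ q) := rfl

theorem mul_dotProduct_self_le_of_orthonormal_eigenbasis {M : Matrix ι ι ℝ} (hM : Mᵀ = M)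
    (hcard : Fintype.card κ = Fintype.card ι)
    (horth : ∀ j k, u j ⬝ᵥ u k = if j = k then 1 else 0)
    {μ : κ → ℝ} (heig : ∀ j, M *ᵥ u j = μ j • u j) {lam : ℝ} {y : ι → ℝ}
    (hy : ∀ j, lam ≤ μ j ∨ u j ⬝ᵥ y = 0) :
    lam * (y ⬝ᵥ y) ≤ y ⬝ᵥ M *ᵥ y := by
  rw [dotProduct_eq_sum_of_orthonormal hcard horth y, dotProduct_eq_sum_of_orthonormal hcard horth,
    mul_sum]
  refine sum_le_sum fun j _ => ?_
  rw [dotProduct_mulVec_of_eigenvector hM (heig j)]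
  rcases hy j with h | h
  · nlinarith [mul_self_nonneg (u j ⬝ᵥ y)]
  · simp [h]

end OrthonormalEigenbasis

def pairEnergy {ι E : Type*} [SeminormedAddCommGroup E] (A : ι → ι → ℝ) (w : ι → E)
    (s t : Finset ι) : ℝ :=
  ∑ i ∈ s, ∑ i' ∈ t, A i i' * ‖w i - w i'‖ ^ 2

section PairEnergy

variable {ι E : Type*} [SeminormedAddCommGroup E] {A : ι → ι → ℝ}

theorem pairEnergy_comm (hA : ∀ i i', A i i' = A i' i) (w : ι → E) (s t : Finset ι) :
    pairEnergy A w s t = pairEnergy A w t s := by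
  rw [pairEnergy, sum_comm]
  exact sum_congr rfl fun i _ => sum_congr rfl fun i' _ => by rw [hA, norm_sub_rev]

theorem pairEnergy_nonneg (hA : ∀ i i', 0 ≤ A i i') (w : ι → E) (s t : Finset ι) :
    0 ≤ pairEnergy A w s t :=
  sum_nonneg fun i _ => sum_nonneg fun i' _ => mul_nonneg (hA i i') (sq_nonneg _)

theorem pairEnergy_const (c : E) (s t : Finset ι) : pairEnergy A (fun _ => c) s t = 0 := by
  simp [pairEnergy]

theorem pairEnergy_subtype (w : ι → E) (s : Finset ι) :
    pairEnergy (fun a b : s => A a b) (fun a => w a) univ univ = pairEnergy A w s s := by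
  rw [pairEnergy, pairEnergy, ← sum_coe_sort s]
  exact sum_congr rfl fun a _ => sum_coe_sort s fun i' => A a i' * ‖w a - w i'‖ ^ 2

theorem pairEnergy_le (hA : ∀ i i', 0 ≤ A i i') {w : ι → E} {s t : Finset ι} {r R : ℝ}
    (hs : ∀ i ∈ s, ‖w i‖ ≤ r) (ht : ∀ i ∈ t, ‖w i‖ ≤ R) :
    pairEnergy A w s t ≤ 2 * (∑ i ∈ s, ∑ i' ∈ t, A i i') * (r ^ 2 + R ^ 2) := by
  calc pairEnergy A w s t ≤ ∑ i ∈ s, ∑ i' ∈ t, A i i' * (2 * (r ^ 2 + R ^ 2)) := by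
        refine sum_le_sum fun i hi => sum_le_sum fun i' hi' => ?_
        refine mul_le_mul_of_nonneg_left ?_ (hA i i')
        calc ‖w i - w i'‖ ^ 2 ≤ (r + R) ^ 2 := by
              gcongr
              exact (norm_sub_le _ _).trans (add_le_add (hs i hi) (ht i' hi'))
          _ ≤ 2 * (r ^ 2 + R ^ 2) := by nlinarith [sq_nonneg (r - R)]
    _ = 2 * (∑ i ∈ s, ∑ i' ∈ t, A i i') * (r ^ 2 + R ^ 2) := by
        simp only [← sum_mul]
        ring

theorem sum_sum_ite_lt_eq_half_pairEnergy [Fintype ι] [LinearOrder ι] (hA : ∀ i i', A i i' = A i' i)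
    (w : ι → E) :
    ∑ i, ∑ i', (if i < i' then A i i' * ‖w i - w i'‖ ^ 2 else 0) =
      pairEnergy A w univ univ / 2 := by
  have hterm : ∀ i i', A i i' * ‖w i - w i'‖ ^ 2 =
      (if i < i' then A i i' * ‖w i - w i'‖ ^ 2 else 0) +
        (if i' < i then A i i' * ‖w i - w i'‖ ^ 2 else 0) := fun i i' => by
    rcases lt_trichotomy i i' with h | rfl | h
    · simp [h, h.not_gt]
    · simp
    · simp [h, h.not_gt]
  have hswap : ∑ i, ∑ i', (if i' < i then A i i' * ‖w i - w i'‖ ^ 2 else 0) =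
      ∑ i, ∑ i', (if i < i' then A i i' * ‖w i - w i'‖ ^ 2 else 0) := by
    rw [sum_comm]
    exact sum_congr rfl fun i _ => sum_congr rfl fun i' _ => by rw [hA, norm_sub_rev]
  have hsplit : pairEnergy A w univ univ =
      ∑ i, ∑ i', (if i < i' then A i i' * ‖w i - w i'‖ ^ 2 else 0) +
        ∑ i, ∑ i', (if i' < i then A i i' * ‖w i - w i'‖ ^ 2 else 0) := by
    rw [pairEnergy, ← sum_add_distrib]
    exact sum_congr rfl fun i _ => by
      rw [← sum_add_distrib]
      exact sum_congr rfl fun i' _ => hterm i i'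
  rw [hsplit, hswap]
  ring

variable [Fintype ι] [DecidableEq ι]

theorem pairEnergy_univ_univ (hA : ∀ i i', A i i' = A i' i) (w : ι → E) (C : Finset ι) :
    pairEnergy A w univ univ =
      pairEnergy A w C C + 2 * pairEnergy A w C Cᶜ + pairEnergy A w Cᶜ Cᶜ := by
  have hsplit : ∀ s : Finset ι, pairEnergy A w s univ = pairEnergy A w s C + pairEnergy A w s Cᶜ :=
    fun s => by
      simp only [pairEnergy, ← sum_add_distrib]
      exact sum_congr rfl fun i _ => (sum_add_sum_compl C _).symm
  have hsplit' : pairEnergy A w univ univ = pairEnergy A w C univ + pairEnergy A w Cᶜ univ :=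
    (sum_add_sum_compl C _).symm
  rw [hsplit', hsplit, hsplit, pairEnergy_comm hA w Cᶜ C]
  ring

theorem half_mul_pairEnergy_le_of_isMin (hA : ∀ i i', A i i' = A i' i)
    (hA₀ : ∀ i i', 0 ≤ A i i') {ℒ : ι → E → ℝ} (hℒ : ∀ i x, 0 ≤ ℒ i x) {α : ℝ} (hα : 0 ≤ α)
    {what : ι → E}
    (hmin : ∀ w, ∑ i, ℒ i (what i) + α / 2 * pairEnergy A what univ univ ≤
      ∑ i, ℒ i (w i) + α / 2 * pairEnergy A w univ univ)
    {C : Finset ι} {wbar : E} {ε : ℝ} (hε : ∑ i ∈ C, ℒ i wbar ≤ ε)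
    {R : ℝ} (hR : ∀ i ∉ C, ‖what i‖ ≤ R) :
    α / 2 * pairEnergy A what C C ≤
      ε + 2 * α * (∑ i ∈ C, ∑ i' ∈ Cᶜ, A i i') * (‖wbar‖ ^ 2 + R ^ 2) := by
  set w := C.piecewise (fun _ => wbar) what
  have hin : ∀ i ∈ C, w i = wbar := fun i hi => C.piecewise_eq_of_mem _ _ hi
  have hout : ∀ i ∈ Cᶜ, w i = what i := fun i hi => C.piecewise_eq_of_notMem _ _ (mem_compl.mp hi)
  have hCC : pairEnergy A w C C = 0 := by
    rw [← pairEnergy_const (A := A) wbar C C]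
    exact sum_congr rfl fun i hi => sum_congr rfl fun i' hi' => by rw [hin i hi, hin i' hi']
  have hcc : pairEnergy A w Cᶜ Cᶜ = pairEnergy A what Cᶜ Cᶜ :=
    sum_congr rfl fun i hi => sum_congr rfl fun i' hi' => by rw [hout i hi, hout i' hi']
  have hbd : pairEnergy A w C Cᶜ ≤ 2 * (∑ i ∈ C, ∑ i' ∈ Cᶜ, A i i') * (‖wbar‖ ^ 2 + R ^ 2) :=
    pairEnergy_le hA₀ (fun i hi => by rw [hin i hi])
      fun i hi => by rw [hout i hi]; exact hR i (mem_compl.mp hi)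
  have hloss : ∑ i, ℒ i (w i) = ∑ i ∈ C, ℒ i wbar + ∑ i ∈ Cᶜ, ℒ i (what i) := by
    rw [← sum_add_sum_compl C]
    exact congr_arg₂ (· + ·) (sum_congr rfl fun i hi => by rw [hin i hi])
      (sum_congr rfl fun i hi => by rw [hout i hi])
  have hloss_compl : ∑ i ∈ Cᶜ, ℒ i (what i) ≤ ∑ i, ℒ i (what i) :=
    sum_le_univ_sum_of_nonneg fun i => hℒ i _
  have h := hmin w
  rw [pairEnergy_univ_univ hA what C, pairEnergy_univ_univ hA w C, hCC, hcc, hloss] at h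
  nlinarith [mul_le_mul_of_nonneg_left hbd hα, mul_nonneg hα (pairEnergy_nonneg hA₀ what C Cᶜ)]

end PairEnergy

section Poincare

variable {κ ι : Type*} [Fintype κ] [DecidableEq κ] [Fintype ι] [DecidableEq ι]
  {B : ι → ι → ℝ} {u : κ → ι → ℝ} {μ : κ → ℝ}

theorem two_mul_sum_sq_sub_mean_le (hB : ∀ a b, B a b = B b a)
    (hcard : Fintype.card κ = Fintype.card ι)
    (horth : ∀ j k, u j ⬝ᵥ u k = if j = k then 1 else 0)
    (heig : ∀ j, weightedLaplacian B *ᵥ u j = μ j • u j)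
    (j₀ : κ) {lam : ℝ} (hlam : 0 < lam) (hgap : ∀ j ≠ j₀, lam ≤ μ j) (x : ι → ℝ) :
    2 * lam * ∑ a, (x a - (Fintype.card ι : ℝ)⁻¹ * ∑ b, x b) ^ 2 ≤
      ∑ a, ∑ b, B a b * (x a - x b) ^ 2 := by
  have hL := transpose_weightedLaplacian hB
  set y : ι → ℝ := fun a => x a - (Fintype.card ι : ℝ)⁻¹ * ∑ b, x b
  -- The kernel contains the constants, so every eigenvector with `μ j > 0` is orthogonal to them.
  have hperp : ∀ j ≠ j₀, u j ⬝ᵥ 1 = 0 := fun j hj => by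
    have h := dotProduct_mulVec_of_eigenvector hL (heig j) 1
    rw [weightedLaplacian_mulVec_one, dotProduct_zero] at h
    exact (mul_eq_zero.mp h.symm).resolve_left (hlam.trans_le (hgap j hj)).ne'
  have hparseval : ∀ p, 1 ⬝ᵥ p = (u j₀ ⬝ᵥ 1) * (u j₀ ⬝ᵥ p) := fun p => by
    rw [dotProduct_eq_sum_of_orthonormal hcard horth, sum_eq_single j₀
      (fun j _ hj => by rw [hperp j hj, zero_mul]) (fun h => absurd (mem_univ j₀) h)]
  have hcard_pos : (0 : ℝ) < Fintype.card ι := by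
    rw [← hcard]; exact_mod_cast Fintype.card_pos_iff.mpr ⟨j₀⟩
  have hu₀ : u j₀ ⬝ᵥ 1 ≠ 0 := fun h => by
    have h1 := hparseval 1
    rw [h, zero_mul, one_dotProduct, Pi.one_def, sum_const, card_univ, nsmul_one] at h1
    exact hcard_pos.ne' h1
  have hy : u j₀ ⬝ᵥ y = 0 := by
    have h := hparseval y
    rw [one_dotProduct, sum_sub_distrib, sum_const, card_univ, nsmul_eq_mul,
      mul_inv_cancel_left₀ hcard_pos.ne', sub_self] at h
    exact (mul_eq_zero.mp h.symm).resolve_left hu₀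
  have hrayleigh := mul_dotProduct_self_le_of_orthonormal_eigenbasis hL hcard horth heig
    (lam := lam) (y := y) fun j => (eq_or_ne j j₀).imp (fun h => h ▸ hy) (hgap j) |>.symm
  have henergy := two_mul_dotProduct_weightedLaplacian_mulVec hB y
  have hdiff : ∀ a b, y a - y b = x a - x b := fun a b => by simp only [y]; ring
  simp only [hdiff] at henergy
  rw [show y ⬝ᵥ y = ∑ a, y a ^ 2 by simp only [dotProduct, sq]] at hrayleigh
  show 2 * lam * ∑ a, y a ^ 2 ≤ _
  linarith

theorem two_mul_sum_norm_sq_sub_mean_le {n : Type*} [Fintype n] (hB : ∀ a b, B a b = B b a)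
    (hcard : Fintype.card κ = Fintype.card ι)
    (horth : ∀ j k, u j ⬝ᵥ u k = if j = k then 1 else 0)
    (heig : ∀ j, weightedLaplacian B *ᵥ u j = μ j • u j)
    (j₀ : κ) {lam : ℝ} (hlam : 0 < lam) (hgap : ∀ j ≠ j₀, lam ≤ μ j)
    (w : ι → EuclideanSpace ℝ n) :
    2 * lam * ∑ a, ‖w a - (Fintype.card ι : ℝ)⁻¹ • ∑ b, w b‖ ^ 2 ≤
      pairEnergy B w univ univ := by
  have hcoord : ∀ v : EuclideanSpace ℝ n, ‖v‖ ^ 2 = ∑ t, v t ^ 2 := fun v => by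
    simp only [EuclideanSpace.norm_sq_eq, Real.norm_eq_abs, sq_abs]
  simp only [hcoord, PiLp.sub_apply, PiLp.smul_apply, WithLp.ofLp_sum, Finset.sum_apply,
    smul_eq_mul]
  calc 2 * lam * ∑ a, ∑ t, (w a t - (Fintype.card ι : ℝ)⁻¹ * ∑ b, w b t) ^ 2
      = ∑ t, 2 * lam * ∑ a, (w a t - (Fintype.card ι : ℝ)⁻¹ * ∑ b, w b t) ^ 2 := by
        rw [sum_comm, mul_sum]
    _ ≤ ∑ t, ∑ a, ∑ b, B a b * (w a t - w b t) ^ 2 := sum_le_sum fun t _ =>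
        two_mul_sum_sq_sub_mean_le hB hcard horth heig j₀ hlam hgap fun a => w a t
    _ = pairEnergy B w univ univ := by
        simp only [pairEnergy, hcoord, PiLp.sub_apply]
        simp only [mul_sum]
        rw [sum_comm]
        exact sum_congr rfl fun a _ => sum_comm

end Poincare

theorem stmt_6_general {n d : ℕ} (A : Fin n → Fin n → ℝ)
    (hsym : ∀ i i', A i i' = A i' i) (hnonneg : ∀ i i', 0 ≤ A i i')
    (ℒ : Fin n → EuclideanSpace ℝ (Fin d) → ℝ)
    (hℒ : ∀ i x, 0 ≤ ℒ i x)
    (α : ℝ) (hα : 0 < α)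
    (f : (Fin n → EuclideanSpace ℝ (Fin d)) → ℝ)
    (hf : ∀ w, f w = ∑ i, ℒ i (w i) +
      α * ∑ i, ∑ i', if i < i' then A i i' * ‖w i - w i'‖ ^ 2 else 0)
    (what : Fin n → EuclideanSpace ℝ (Fin d))
    (hmin : ∀ w, f what ≤ f w)
    (C : Finset (Fin n)) (hC : 1 < C.card)
    (wbar : EuclideanSpace ℝ (Fin d)) (ε : ℝ)
    (hε : ∑ i ∈ C, ℒ i wbar ≤ ε)
    (R : ℝ) (hR : ∀ i ∉ C, ‖what i‖ ≤ R)
    -- Laplacian of the subgraph induced on `C`: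
    (LC : Matrix {x // x ∈ C} {x // x ∈ C} ℝ)
    (hLC : ∀ a b : {x // x ∈ C}, LC a b =
      if a = b then ∑ c ∈ Finset.univ.erase a, A a.1 c.1 else -A a.1 b.1)
    -- eigenvalues `μ` of `LC` in nondecreasing order with orthonormal eigenbasis `u`:
    (μ : Fin C.card → ℝ) (u : Fin C.card → ({x // x ∈ C} → ℝ))
    (hmono : Monotone μ)
    (horth : ∀ j k, u j ⬝ᵥ u k = if j = k then (1 : ℝ) else 0)
    (heig : ∀ j, LC *ᵥ u j = μ j • u j)
    (lam₂ : ℝ) (hlam₂ : lam₂ = μ ⟨1, hC⟩) (hlam₂pos : 0 < lam₂)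
    (bd : ℝ) (hbd : bd = ∑ i ∈ C, ∑ i' ∈ Cᶜ, A i i') :
    ∑ i ∈ C, ‖what i - (C.card : ℝ)⁻¹ • ∑ i' ∈ C, what i'‖ ^ 2 ≤
      (1 / (α * lam₂)) * (ε + 2 * α * bd * (‖wbar‖ ^ 2 + R ^ 2)) := by
  subst hbd
  obtain rfl : LC = weightedLaplacian fun a b : C => A a b := Matrix.ext hLC
  have hgap : ∀ j ≠ ⟨0, by omega⟩, lam₂ ≤ μ j := fun j hj =>
    hlam₂ ▸ hmono (Fin.mk_le_of_le_val (Nat.one_le_iff_ne_zero.mpr (Fin.val_ne_of_ne hj)))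
  have hspec := two_mul_sum_norm_sq_sub_mean_le (fun a b : C => hsym a b) (by simp) horth heig
    _ hlam₂pos hgap fun a : C => what a
  rw [pairEnergy_subtype, Fintype.card_coe, sum_coe_sort C what] at hspec
  rw [← sum_coe_sort C]
  have hopt := half_mul_pairEnergy_le_of_isMin hsym hnonneg hℒ hα.le
    (fun w => by simpa only [hf, sum_sum_ite_lt_eq_half_pairEnergy hsym, mul_div_assoc',
      div_mul_eq_mul_div] using hmin w) hε hR
  rw [one_div, inv_mul_eq_div, le_div_iff₀ (by positivity)]
  linarith [mul_le_mul_of_nonneg_left hspec (by positivity : (0 : ℝ) ≤ α / 2)]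

/-- **Main theorem.** Let `ŵ` be a minimizer of the GTVMin objective
`f(w) = ∑_i L_i(w^(i)) + α ∑_{{i,i'}∈E} A_{i,i'}‖w^(i) − w^(i')‖²` (each
unordered edge counted once) over a weighted similarity graph with symmetric
nonnegative weights `A` and nonnegative local losses `L_i`, with `α > 0`.
Suppose the cluster `C` satisfies `∑_{i∈C} L_i(w̄) ≤ ε` for some `w̄ ∈ ℝ^d`,
and `‖ŵ^(i)‖ ≤ R` for all `i ∉ C`.  Let `lam₂` be the second smallest
eigenvalue of the Laplacian `LC` of the subgraph induced on `C` (eigenvalues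
`μ` in nondecreasing order, orthonormal eigenbasis `u`), and let `bd(C)` be the
total weight of boundary edges of `C`. Then
`∑_{i∈C} ‖ŵ^(i) − avg_C‖² ≤ (1/(α·lam₂)) (ε + 2 α bd(C) (‖w̄‖² + R²))`. -/
theorem stmt_6 {n d : ℕ} (A : Fin n → Fin n → ℝ)
    (hsym : ∀ i i', A i i' = A i' i) (hnonneg : ∀ i i', 0 ≤ A i i')
    (hdiag : ∀ i, A i i = 0)
    (ℒ : Fin n → EuclideanSpace ℝ (Fin d) → ℝ)
    (hℒ : ∀ i x, 0 ≤ ℒ i x)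
    (α : ℝ) (hα : 0 < α)
    (f : (Fin n → EuclideanSpace ℝ (Fin d)) → ℝ)
    (hf : ∀ w, f w = ∑ i, ℒ i (w i) +
      α * ∑ i, ∑ i', if i < i' then A i i' * ‖w i - w i'‖ ^ 2 else 0)
    (what : Fin n → EuclideanSpace ℝ (Fin d))
    (hmin : ∀ w, f what ≤ f w)
    (C : Finset (Fin n)) (hC : 1 < C.card)
    (wbar : EuclideanSpace ℝ (Fin d)) (ε : ℝ)
    (hε : ∑ i ∈ C, ℒ i wbar ≤ ε)
    (R : ℝ) (hR : ∀ i ∉ C, ‖what i‖ ≤ R)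
    -- Laplacian of the subgraph induced on `C`:
    (LC : Matrix {x // x ∈ C} {x // x ∈ C} ℝ)
    (hLC : ∀ a b : {x // x ∈ C}, LC a b =
      if a = b then ∑ c ∈ Finset.univ.erase a, A a.1 c.1 else -A a.1 b.1)
    -- eigenvalues `μ` of `LC` in nondecreasing order with orthonormal eigenbasis `u`:
    (μ : Fin C.card → ℝ) (u : Fin C.card → ({x // x ∈ C} → ℝ))
    (hmono : Monotone μ)
    (horth : ∀ j k, u j ⬝ᵥ u k = if j = k then (1 : ℝ) else 0)
    (heig : ∀ j, LC *ᵥ u j = μ j • u j)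
    (lam₂ : ℝ) (hlam₂ : lam₂ = μ ⟨1, hC⟩) (hlam₂pos : 0 < lam₂)
    (bd : ℝ) (hbd : bd = ∑ i ∈ C, ∑ i' ∈ Cᶜ, A i i') :
    ∑ i ∈ C, ‖what i - (C.card : ℝ)⁻¹ • ∑ i' ∈ C, what i'‖ ^ 2 ≤
      (1 / (α * lam₂)) * (ε + 2 * α * bd * (‖wbar‖ ^ 2 + R ^ 2)) :=
  stmt_6_general A hsym hnonneg ℒ hℒ α hα f hf what hmin C hC wbar ε hε R hR LC hLC μ u hmono horth
    heig lam₂ hlam₂ hlam₂pos bd hbd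
end

section
/- (Single-cluster specialization) Under the setting of GTVMin, if C = V (all nodes form one cluster satisfying ∑_{i∈V} L_i(w̄) ≤ ε for some w̄) and the graph is connected with Laplacian second eigenvalue λ₂ > 0, then any minimizer {ŵ^(i)} of the GTVMin objective satisfies ∑_{i∈V} ‖ŵ^(i) − avg‖² ≤ ε / (α λ₂), where avg = (1/n) ∑_{i∈V} ŵ^(i). In particular the deviation from the average can be made arbitrarily small by increasing α. -/
open Finset Matrix

/-!
Comparing the minimizer with the constant configuration `w̄` bounds `α` times the graph total
variation of `ŵ` by `ε`, because the losses are nonnegative. In each coordinate the total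
variation is the Laplacian quadratic form `xᵀ L x`. Since `L 1 = 0` while every eigenvalue from
`λ₂` on is positive, the all-ones vector is a multiple of the bottom eigenvector `u₀` (and
`μ₀ = 0`); so the deviation of `x` from its mean is the component of `x` orthogonal to `u₀`, on
which `xᵀ L x ≥ λ₂ ‖·‖²`.
-/

section Orthogonal

variable {ι R : Type*} [Fintype ι] [DecidableEq ι] [CommRing R]

theorem Matrix.of_mul_transpose_eq_one_of_orthonormal {u : ι → ι → R}
    (horth : ∀ j k, u j ⬝ᵥ u k = if j = k then 1 else 0) : of u * (of u)ᵀ = 1 := by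
  ext j k
  exact mul_apply'.trans ((horth j k).trans one_apply.symm)

theorem Matrix.mul_transpose_of_eq_transpose_mul_diagonal {L : Matrix ι ι R} {u : ι → ι → R}
    {μ : ι → R} (heig : ∀ j, L *ᵥ u j = μ j • u j) : L * (of u)ᵀ = (of u)ᵀ * diagonal μ := by
  ext i j
  rw [mul_diagonal]
  exact (congrFun (heig j) i).trans (mul_comm _ _)

variable {U : Matrix ι ι R} (hU : Uᵀ * U = 1)
include hU

theorem Matrix.dotProduct_mulVec_mulVec_of_transpose_mul_self (x y : ι → R) :
    U *ᵥ x ⬝ᵥ U *ᵥ y = x ⬝ᵥ y := by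
  rw [dotProduct_mulVec, ← mulVec_transpose, mulVec_mulVec, hU, one_mulVec]

variable {L : Matrix ι ι R} {μ : ι → R} (heig : L * Uᵀ = Uᵀ * diagonal μ)
include heig

theorem Matrix.eq_transpose_mul_diagonal_mul : L = Uᵀ * diagonal μ * U := by
  rw [← heig, Matrix.mul_assoc, hU, Matrix.mul_one]

theorem Matrix.dotProduct_mulVec_eq_sum_mul_sq (x : ι → R) :
    x ⬝ᵥ L *ᵥ x = ∑ j, μ j * (U *ᵥ x) j ^ 2 := by
  rw [eq_transpose_mul_diagonal_mul hU heig, ← mulVec_mulVec, ← mulVec_mulVec, dotProduct_mulVec,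
    vecMul_transpose, dotProduct]
  exact sum_congr rfl fun j _ ↦ by rw [mulVec_diagonal]; ring

theorem Matrix.mul_mulVec_apply_eq_zero {v : ι → R} (hv : L *ᵥ v = 0) (j : ι) :
    μ j * (U *ᵥ v) j = 0 := by
  have hUL : U * L = diagonal μ * U := by
    rw [eq_transpose_mul_diagonal_mul hU heig, ← Matrix.mul_assoc, ← Matrix.mul_assoc,
      mul_eq_one_comm.mp hU, Matrix.one_mul]
  rw [← mulVec_diagonal, mulVec_mulVec, ← hUL, ← mulVec_mulVec, hv, mulVec_zero]
  rfl

end Orthogonal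

theorem Fin.sum_sub_mean_sq {K : Type*} [Field K] {n : ℕ} (x : Fin n → K) :
    ∑ i, (x i - (n : K)⁻¹ * ∑ j, x j) ^ 2 = ∑ i, x i ^ 2 - (∑ i, x i) ^ 2 / n := by
  simp only [sub_sq, sum_add_distrib, sum_sub_distrib, ← sum_mul, ← mul_sum, sum_const,
    nsmul_eq_mul]
  rcases eq_or_ne (n : K) 0 with hn | hn
  · simp [hn]
  · field_simp
    ring

theorem Matrix.mul_sum_sub_mean_sq_le_dotProduct_mulVec {n : ℕ} (hn : 1 < n)
    {L U : Matrix (Fin n) (Fin n) ℝ} {μ : Fin n → ℝ} (hU : Uᵀ * U = 1)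
    (heig : L * Uᵀ = Uᵀ * diagonal μ) (hmono : Monotone μ) (hgap : 0 < μ ⟨1, hn⟩)
    (hL1 : L *ᵥ 1 = 0) (x : Fin n → ℝ) :
    μ ⟨1, hn⟩ * ∑ i, (x i - (n : ℝ)⁻¹ * ∑ j, x j) ^ 2 ≤ x ⬝ᵥ L *ᵥ x := by
  have : NeZero n := ⟨by omega⟩
  set a := U *ᵥ x
  set b := U *ᵥ 1
  have hgap_le : ∀ j ≠ 0, μ ⟨1, hn⟩ ≤ μ j := fun j hj ↦
    hmono (Fin.le_def.mpr (Nat.one_le_iff_ne_zero.mpr (Fin.val_ne_zero_iff.mpr hj)))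
  have hb : ∀ j ≠ 0, b j = 0 := fun j hj ↦
    (mul_eq_zero.mp (mul_mulVec_apply_eq_zero hU heig hL1 j)).resolve_left
      (hgap.trans_le (hgap_le j hj)).ne'
  have hdot_b : ∀ y, b ⬝ᵥ U *ᵥ y = b 0 * (U *ᵥ y) 0 := fun y ↦
    sum_eq_single 0 (fun j _ hj ↦ by rw [hb j hj, zero_mul]) (by simp)
  have hsum : ∑ i, x i = b 0 * a 0 := by
    rw [← one_dotProduct, ← dotProduct_mulVec_mulVec_of_transpose_mul_self hU, hdot_b]
  have hcard : (n : ℝ) = b 0 ^ 2 := by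
    have hone : (1 : Fin n → ℝ) ⬝ᵥ 1 = n := by simp
    rw [← hone, ← dotProduct_mulVec_mulVec_of_transpose_mul_self hU, hdot_b, sq]
  have hb0 : b 0 ≠ 0 := by
    intro h
    simp [h] at hcard
    omega
  have hμ0 : μ 0 = 0 :=
    (mul_eq_zero.mp (mul_mulVec_apply_eq_zero hU heig hL1 0)).resolve_right hb0
  have hvar : ∑ i, (x i - (n : ℝ)⁻¹ * ∑ j, x j) ^ 2 = ∑ j ∈ univ.erase 0, a j ^ 2 := by
    have hsq : ∑ i, x i ^ 2 = ∑ j, a j ^ 2 := by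
      simpa only [dotProduct, sq] using (dotProduct_mulVec_mulVec_of_transpose_mul_self hU x x).symm
    rw [Fin.sum_sub_mean_sq, hsq, hsum, hcard, ← add_sum_erase _ _ (mem_univ 0)]
    field_simp
    ring
  rw [hvar, dotProduct_mulVec_eq_sum_mul_sq hU heig, ← add_sum_erase _ _ (mem_univ 0), hμ0,
    zero_mul, zero_add, mul_sum]
  exact sum_le_sum fun j hj ↦
    mul_le_mul_of_nonneg_right (hgap_le j (ne_of_mem_erase hj)) (sq_nonneg _)

theorem Finset.sum_sum_eq_two_nsmul_sum_sum_ite_lt {ι M : Type*} [Fintype ι] [LinearOrder ι]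
    [AddCommMonoid M] (g : ι → ι → M) (hg : ∀ i j, g i j = g j i) (hd : ∀ i, g i i = 0) :
    ∑ i, ∑ j, g i j = 2 • ∑ i, ∑ j, if i < j then g i j else 0 := by
  have hsplit : ∀ i j, g i j = (if i < j then g i j else 0) + if j < i then g j i else 0 := by
    intro i j
    rcases lt_trichotomy i j with h | rfl | h
    · simp [h, h.not_gt]
    · simp [hd]
    · simp [h, h.not_gt, hg i j]
  calc ∑ i, ∑ j, g i j
      = ∑ i, ∑ j, ((if i < j then g i j else 0) + if j < i then g j i else 0) :=
        sum_congr rfl fun i _ ↦ sum_congr rfl fun j _ ↦ hsplit i j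
    _ = _ := by
        simp_rw [sum_add_distrib]
        rw [sum_comm (f := fun i j ↦ if j < i then g j i else 0), two_nsmul]

section Laplacian

variable {ι R : Type*} [Fintype ι] [DecidableEq ι] [CommRing R] {A : ι → ι → R} {L : Matrix ι ι R}
  (hL : ∀ i i', L i i' = if i = i' then ∑ j ∈ univ.erase i, A i j else -A i i')
include hL

theorem laplacian_mulVec_apply (x : ι → R) (i : ι) : (L *ᵥ x) i = ∑ j, A i j * (x i - x j) := by
  have hoff : ∑ j ∈ univ.erase i, L i j * x j = ∑ j ∈ univ.erase i, -A i j * x j :=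
    sum_congr rfl fun j hj ↦ by rw [hL, if_neg (ne_of_mem_erase hj).symm]
  calc (L *ᵥ x) i = L i i * x i + ∑ j ∈ univ.erase i, L i j * x j :=
        (add_sum_erase _ _ (mem_univ i)).symm
    _ = ∑ j ∈ univ.erase i, A i j * (x i - x j) := by
        rw [hoff, hL, if_pos rfl, sum_mul, ← sum_add_distrib]
        exact sum_congr rfl fun j _ ↦ by ring
    _ = ∑ j, A i j * (x i - x j) := sum_erase _ (by rw [sub_self, mul_zero])

theorem laplacian_mulVec_one : L *ᵥ 1 = 0 := by
  ext i
  simp [laplacian_mulVec_apply hL]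

theorem two_mul_laplacian_dotProduct_mulVec (hsym : ∀ i i', A i i' = A i' i) (x : ι → R) :
    2 * (x ⬝ᵥ L *ᵥ x) = ∑ i, ∑ j, A i j * (x i - x j) ^ 2 := by
  have hform : x ⬝ᵥ L *ᵥ x = ∑ i, ∑ j, A i j * (x i * (x i - x j)) := by
    simp only [dotProduct, laplacian_mulVec_apply hL, mul_sum]
    exact sum_congr rfl fun i _ ↦ sum_congr rfl fun j _ ↦ by ring
  have hswap : x ⬝ᵥ L *ᵥ x = ∑ i, ∑ j, A i j * (x j * (x j - x i)) := by
    rw [hform, sum_comm]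
    exact sum_congr rfl fun i _ ↦ sum_congr rfl fun j _ ↦ by rw [hsym]
  rw [two_mul]
  nth_rw 1 [hform]
  rw [hswap]
  simp_rw [← sum_add_distrib]
  exact sum_congr rfl fun i _ ↦ sum_congr rfl fun j _ ↦ by ring

end Laplacian

section GraphTotalVariation

variable {ι : Type*} [Fintype ι] [LinearOrder ι]

def graphTotalVariation {E : Type*} [SeminormedAddCommGroup E] (A : ι → ι → ℝ) (w : ι → E) : ℝ :=
  ∑ i, ∑ i', if i < i' then A i i' * ‖w i - w i'‖ ^ 2 else 0

theorem graphTotalVariation_const {E : Type*} [SeminormedAddCommGroup E] (A : ι → ι → ℝ) (c : E) :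
    graphTotalVariation A (fun _ ↦ c) = 0 := by
  simp [graphTotalVariation]

theorem mul_graphTotalVariation_le_of_forall_le {E : Type*} [SeminormedAddCommGroup E]
    {A : ι → ι → ℝ} {ℒ : ι → E → ℝ} (hℒ : ∀ i x, 0 ≤ ℒ i x) {α : ℝ} {f : (ι → E) → ℝ}
    (hf : ∀ w, f w = ∑ i, ℒ i (w i) + α * graphTotalVariation A w) {what : ι → E}
    (hmin : ∀ w, f what ≤ f w) (wbar : E) :
    α * graphTotalVariation A what ≤ ∑ i, ℒ i wbar := by
  have hconst := hmin fun _ ↦ wbar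
  rw [hf, hf, graphTotalVariation_const, mul_zero, add_zero] at hconst
  linarith [sum_nonneg fun i (_ : i ∈ univ) ↦ hℒ i (what i)]

theorem two_mul_graphTotalVariation {κ : Type*} [Fintype κ] {A : ι → ι → ℝ}
    (hsym : ∀ i i', A i i' = A i' i) (w : ι → EuclideanSpace ℝ κ) :
    2 * graphTotalVariation A w = ∑ k, ∑ i, ∑ j, A i j * (w i k - w j k) ^ 2 := by
  rw [graphTotalVariation, two_mul, ← two_nsmul, ← sum_sum_eq_two_nsmul_sum_sum_ite_lt
    (fun i j ↦ A i j * ‖w i - w j‖ ^ 2) (fun i j ↦ by rw [hsym, norm_sub_rev])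
    (fun i ↦ by rw [sub_self, norm_zero]; ring)]
  simp only [EuclideanSpace.real_norm_sq_eq, PiLp.sub_apply, mul_sum]
  exact (sum_congr rfl fun i _ ↦ sum_comm).trans sum_comm

end GraphTotalVariation

theorem EuclideanSpace.sum_norm_sub_mean_sq {κ : Type*} [Fintype κ] {n : ℕ}
    (w : Fin n → EuclideanSpace ℝ κ) :
    ∑ i, ‖w i - (n : ℝ)⁻¹ • ∑ j, w j‖ ^ 2 = ∑ k, ∑ i, (w i k - (n : ℝ)⁻¹ * ∑ j, w j k) ^ 2 := by
  simp only [EuclideanSpace.real_norm_sq_eq, PiLp.sub_apply, PiLp.smul_apply, smul_eq_mul,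
    WithLp.ofLp_sum, Finset.sum_apply]
  exact sum_comm

theorem stmt_7_general {n d : ℕ} (hn : 1 < n) (A : Fin n → Fin n → ℝ)
    (hsym : ∀ i i', A i i' = A i' i)
    (ℒ : Fin n → EuclideanSpace ℝ (Fin d) → ℝ)
    (hℒ : ∀ i x, 0 ≤ ℒ i x)
    (α : ℝ) (hα : 0 < α)
    (f : (Fin n → EuclideanSpace ℝ (Fin d)) → ℝ)
    (hf : ∀ w, f w = ∑ i, ℒ i (w i) +
      α * ∑ i, ∑ i', if i < i' then A i i' * ‖w i - w i'‖ ^ 2 else 0)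
    (what : Fin n → EuclideanSpace ℝ (Fin d))
    (hmin : ∀ w, f what ≤ f w)
    (wbar : EuclideanSpace ℝ (Fin d)) (ε : ℝ)
    (hε : ∑ i, ℒ i wbar ≤ ε)
    -- Laplacian of the (whole) graph:
    (L : Matrix (Fin n) (Fin n) ℝ)
    (hL : ∀ i i', L i i' = if i = i' then ∑ j ∈ Finset.univ.erase i, A i j else -A i i')
    -- eigenvalues `μ` of `L` in nondecreasing order with orthonormal eigenbasis `u`:
    (μ : Fin n → ℝ) (u : Fin n → (Fin n → ℝ))
    (hmono : Monotone μ)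
    (horth : ∀ j k, u j ⬝ᵥ u k = if j = k then (1 : ℝ) else 0)
    (heig : ∀ j, L *ᵥ u j = μ j • u j)
    (lam₂ : ℝ) (hlam₂ : lam₂ = μ ⟨1, hn⟩) (hlam₂pos : 0 < lam₂) :
    ∑ i, ‖what i - (n : ℝ)⁻¹ • ∑ i', what i'‖ ^ 2 ≤ ε / (α * lam₂) := by
  subst hlam₂
  set x : Fin d → Fin n → ℝ := fun k i ↦ what i k
  have hgtv : α * graphTotalVariation A what ≤ ε :=
    (mul_graphTotalVariation_le_of_forall_le hℒ hf hmin wbar).trans hε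
  have hgtv_eq : graphTotalVariation A what = ∑ k, x k ⬝ᵥ L *ᵥ x k := by
    have h := two_mul_graphTotalVariation hsym what
    simp_rw [← two_mul_laplacian_dotProduct_mulVec hL hsym, ← mul_sum] at h
    linarith
  have hU : (of u)ᵀ * of u = 1 := mul_eq_one_comm.mp (of_mul_transpose_eq_one_of_orthonormal horth)
  have hgap : μ ⟨1, hn⟩ * ∑ k, ∑ i, (x k i - (n : ℝ)⁻¹ * ∑ j, x k j) ^ 2
      ≤ graphTotalVariation A what := by
    rw [hgtv_eq, mul_sum]
    exact sum_le_sum fun k _ ↦ mul_sum_sub_mean_sq_le_dotProduct_mulVec hn hU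
      (mul_transpose_of_eq_transpose_mul_diagonal heig) hmono hlam₂pos (laplacian_mulVec_one hL) _
  rw [EuclideanSpace.sum_norm_sub_mean_sq, le_div_iff₀ (mul_pos hα hlam₂pos)]
  calc _ = α * (μ ⟨1, hn⟩ * ∑ k, ∑ i, (x k i - (n : ℝ)⁻¹ * ∑ j, x k j) ^ 2) := by ring
    _ ≤ α * graphTotalVariation A what := by gcongr
    _ ≤ ε := hgtv

/-- **Single-cluster specialization.** If all nodes form one cluster `C = V`
satisfying `∑_{i∈V} L_i(w̄) ≤ ε` for some `w̄`, and the graph is connected so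
that the second smallest eigenvalue `lam₂` of its Laplacian is positive, then
any minimizer `ŵ` of the GTVMin objective satisfies
`∑_{i∈V} ‖ŵ^(i) − avg‖² ≤ ε / (α · lam₂)` with `avg = (1/n) ∑_i ŵ^(i)`. -/
theorem stmt_7 {n d : ℕ} (hn : 1 < n) (A : Fin n → Fin n → ℝ)
    (hsym : ∀ i i', A i i' = A i' i) (hnonneg : ∀ i i', 0 ≤ A i i')
    (hdiag : ∀ i, A i i = 0)
    (ℒ : Fin n → EuclideanSpace ℝ (Fin d) → ℝ)
    (hℒ : ∀ i x, 0 ≤ ℒ i x)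
    (α : ℝ) (hα : 0 < α)
    (f : (Fin n → EuclideanSpace ℝ (Fin d)) → ℝ)
    (hf : ∀ w, f w = ∑ i, ℒ i (w i) +
      α * ∑ i, ∑ i', if i < i' then A i i' * ‖w i - w i'‖ ^ 2 else 0)
    (what : Fin n → EuclideanSpace ℝ (Fin d))
    (hmin : ∀ w, f what ≤ f w)
    (wbar : EuclideanSpace ℝ (Fin d)) (ε : ℝ)
    (hε : ∑ i, ℒ i wbar ≤ ε)
    -- Laplacian of the (whole) graph:
    (L : Matrix (Fin n) (Fin n) ℝ)
    (hL : ∀ i i', L i i' = if i = i' then ∑ j ∈ Finset.univ.erase i, A i j else -A i i')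
    -- eigenvalues `μ` of `L` in nondecreasing order with orthonormal eigenbasis `u`:
    (μ : Fin n → ℝ) (u : Fin n → (Fin n → ℝ))
    (hmono : Monotone μ)
    (horth : ∀ j k, u j ⬝ᵥ u k = if j = k then (1 : ℝ) else 0)
    (heig : ∀ j, L *ᵥ u j = μ j • u j)
    (lam₂ : ℝ) (hlam₂ : lam₂ = μ ⟨1, hn⟩) (hlam₂pos : 0 < lam₂) :
    ∑ i, ‖what i - (n : ℝ)⁻¹ • ∑ i', what i'‖ ^ 2 ≤ ε / (α * lam₂) :=
  stmt_7_general hn A hsym ℒ hℒ α hα f hf what hmin wbar ε hε L hL μ u hmono horth heig lam₂ hlam₂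
    hlam₂pos
end
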